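/- Let A be a residuated chain (a residuated lattice whose lattice order is total), let K be a cancellative monoid, and let φ : K → ResEnd(A) be a monoid homomorphism into the monoid of residuated endomorphisms of A: each φ_k is a monoid endomorphism of A admitting a residual φ_k* with φ_k(a) ≤ b iff a ≤ φ_k*(b) for all a, b ∈ A, and φ_1 = id, φ_{k₁k₂} = φ_{k₁} ∘ φ_{k₂}. On R = (A × K) ∪ {⊥, ⊤} define multiplication by (a₁,k₁)·(a₂,k₂) = (a₁·φ_{k₁}(a₂), k₁k₂), with ⊥ absorbing on R and ⊤ absorbing on R \ {⊥}, and order R by: ⊥ is the bottom, ⊤ is the top, and (a₁,k₁) ≤ (a₂,k₂) iff k₁ = k₂ and a₁ ≤ a₂ in A. Then R is a residuated lattice: multiplication is associative with identity (1,1), order-preserving, and for all x, z ∈ R the sets {y : x·y ≤ z} and {y : y·x ≤ z} have maximum elements. -/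
import Mathlib


/-- Multiplication on `R = (A × K) ∪ {⊥, ⊤}` coming from the semidirect product
`(a₁,k₁)·(a₂,k₂) = (a₁·φ_{k₁}(a₂), k₁k₂)`, with `⊥ = Sum.inr false` absorbing on `R` and
`⊤ = Sum.inr true` absorbing on `R \ {⊥}`. -/
def SdMul {A K : Type*} [Mul A] [Mul K] (φ : K → A → A) :
    (A × K ⊕ Bool) → (A × K ⊕ Bool) → (A × K ⊕ Bool)
  | Sum.inr false, _ => Sum.inr false
  | _, Sum.inr false => Sum.inr false
  | Sum.inr true, _ => Sum.inr true
  | _, Sum.inr true => Sum.inr true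
  | Sum.inl p, Sum.inl q => Sum.inl (p.1 * φ p.2 q.1, p.2 * q.2)

/-- The order on `R = (A × K) ∪ {⊥, ⊤}`: `⊥` is the bottom, `⊤` is the top, and
`(a₁,k₁) ≤ (a₂,k₂)` iff `k₁ = k₂` and `a₁ ≤ a₂`. -/
def SdLe {A K : Type*} [LE A] : (A × K ⊕ Bool) → (A × K ⊕ Bool) → Prop
  | Sum.inr false, _ => True
  | _, Sum.inr true => True
  | Sum.inl p, Sum.inl q => p.2 = q.2 ∧ p.1 ≤ q.1
  | _, _ => False

set_option maxHeartbeats 1600000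

/-- The bounded semidirect product of a residuated chain `A` and a cancellative monoid `K`
with respect to a homomorphism `φ : K → ResEnd(A)` is a residuated lattice: the order is a
bounded lattice order, multiplication is associative with identity `(1,1)`,
order-preserving, and all division sets have maxima. -/
theorem stmt_17 {A K : Type*} [LinearOrder A] [Monoid A] [Monoid K]
    (ldA rdA : A → A → A)
    (hlA : ∀ x y z : A, x * y ≤ z ↔ y ≤ ldA x z)
    (hrA : ∀ x y z : A, x * y ≤ z ↔ x ≤ rdA z y)
    (hK : ∀ x y z : K, (x * y = x * z → y = z) ∧ (y * x = z * x → y = z))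
    (φ : K → A → A) (φs : K → A → A)
    (hφres : ∀ (k : K) (a b : A), φ k a ≤ b ↔ a ≤ φs k b)
    (hφmul : ∀ (k : K) (a b : A), φ k (a * b) = φ k a * φ k b)
    (hφone : ∀ k : K, φ k 1 = 1)
    (hφid : ∀ a : A, φ 1 a = a)
    (hφcomp : ∀ (k₁ k₂ : K) (a : A), φ (k₁ * k₂) a = φ k₁ (φ k₂ a)) :
    -- SdLe is a partial order
    (∀ x : A × K ⊕ Bool, SdLe x x) ∧
    (∀ x y : A × K ⊕ Bool, SdLe x y → SdLe y x → x = y) ∧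
    (∀ x y z : A × K ⊕ Bool, SdLe x y → SdLe y z → SdLe x z) ∧
    -- with bottom `⊥` and top `⊤`
    (∀ x : A × K ⊕ Bool, SdLe (Sum.inr false) x ∧ SdLe x (Sum.inr true)) ∧
    -- it is a lattice order: binary joins and meets exist
    (∀ x y : A × K ⊕ Bool, ∃ j, SdLe x j ∧ SdLe y j ∧ ∀ z, SdLe x z → SdLe y z → SdLe j z) ∧
    (∀ x y : A × K ⊕ Bool, ∃ m, SdLe m x ∧ SdLe m y ∧ ∀ z, SdLe z x → SdLe z y → SdLe z m) ∧
    -- multiplication is associative with identity (1, 1)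
    (∀ x y z : A × K ⊕ Bool, SdMul φ (SdMul φ x y) z = SdMul φ x (SdMul φ y z)) ∧
    (∀ x : A × K ⊕ Bool,
      SdMul φ (Sum.inl ((1 : A), (1 : K))) x = x ∧ SdMul φ x (Sum.inl ((1 : A), (1 : K))) = x) ∧
    -- multiplication is order-preserving
    (∀ x y z : A × K ⊕ Bool, SdLe y z →
      SdLe (SdMul φ x y) (SdMul φ x z) ∧ SdLe (SdMul φ y x) (SdMul φ z x)) ∧
    -- all division sets have maxima, so the result is a residuated lattice
    (∀ x z : A × K ⊕ Bool,
      (∃ m, SdLe (SdMul φ x m) z ∧ ∀ y, SdLe (SdMul φ x y) z → SdLe y m) ∧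
      (∃ m, SdLe (SdMul φ m x) z ∧ ∀ y, SdLe (SdMul φ y x) z → SdLe y m)) := by
  classical
  have mulL : ∀ x y z : A, y ≤ z → x * y ≤ x * z := fun x y z h =>
    (hlA x y (x * z)).mpr (h.trans ((hlA x z (x * z)).mp le_rfl))
  have mulR : ∀ x y z : A, y ≤ z → y * x ≤ z * x := fun x y z h =>
    (hrA y x (z * x)).mpr (h.trans ((hrA z x (z * x)).mp le_rfl))
  have phimono : ∀ (k : K) (a b : A), a ≤ b → φ k a ≤ φ k b := fun k a b h =>
    (hφres k a (φ k b)).mpr (h.trans ((hφres k b (φ k b)).mp le_rfl))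
  refine ⟨?_, ?_, ?_, ?_, ?_, ?_, ?_, ?_, ?_, ?_⟩
  · -- reflexivity
    rintro (p | (_ | _)) <;> simp [SdLe]
  · -- antisymmetry
    rintro (⟨a, k⟩ | (_ | _)) (⟨b, l⟩ | (_ | _)) h1 h2 <;>
      first
        | rfl
        | exact (h1 : False).elim
        | exact (h2 : False).elim
        | (have hpq : (a, k) = (b, l) := by
             obtain ⟨h1k, h1a⟩ := (h1 : k = l ∧ a ≤ b)
             obtain ⟨h2k, h2a⟩ := (h2 : l = k ∧ b ≤ a)
             exact Prod.ext (le_antisymm h1a h2a) h1k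
           rw [hpq])
  · -- transitivity
    rintro (⟨a, k⟩ | (_ | _)) (⟨b, l⟩ | (_ | _)) (⟨c, m⟩ | (_ | _)) h1 h2 <;>
      first
        | trivial
        | exact (h1 : False).elim
        | exact (h2 : False).elim
        | exact show k = m ∧ a ≤ c from
            ⟨(h1 : k = l ∧ a ≤ b).1.trans (h2 : l = m ∧ b ≤ c).1,
             (h1 : k = l ∧ a ≤ b).2.trans (h2 : l = m ∧ b ≤ c).2⟩
  · -- bounds
    rintro (p | (_ | _)) <;> simp [SdLe]
  · -- joins
    rintro (⟨a, k⟩ | (_ | _)) (⟨b, l⟩ | (_ | _))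
    · by_cases hk : k = l
      · subst hk
        refine ⟨Sum.inl (max a b, k), ⟨rfl, le_max_left _ _⟩, ⟨rfl, le_max_right _ _⟩, ?_⟩
        rintro (⟨c, m⟩ | (_ | _)) h1 h2
        · exact show k = m ∧ max a b ≤ c from
            ⟨(h1 : k = m ∧ a ≤ c).1, max_le (h1 : k = m ∧ a ≤ c).2 (h2 : k = m ∧ b ≤ c).2⟩
        · exact (h1 : False).elim
        · trivial
      · refine ⟨Sum.inr true, trivial, trivial, ?_⟩
        rintro (⟨c, m⟩ | (_ | _)) h1 h2
        · exact (hk ((h1 : k = m ∧ a ≤ c).1.trans (h2 : l = m ∧ b ≤ c).1.symm)).elim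
        · exact (h1 : False).elim
        · trivial
    · exact ⟨Sum.inl (a, k), ⟨rfl, le_rfl⟩, trivial, fun z h1 _ => h1⟩
    · exact ⟨Sum.inr true, trivial, trivial, fun z _ h2 => h2⟩
    · exact ⟨Sum.inl (b, l), trivial, ⟨rfl, le_rfl⟩, fun z _ h2 => h2⟩
    · exact ⟨Sum.inr false, trivial, trivial, fun z h1 _ => h1⟩
    · exact ⟨Sum.inr true, trivial, trivial, fun z _ h2 => h2⟩
    · exact ⟨Sum.inr true, trivial, trivial, fun z h1 _ => h1⟩
    · exact ⟨Sum.inr true, trivial, trivial, fun z h1 _ => h1⟩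
    · exact ⟨Sum.inr true, trivial, trivial, fun z h1 _ => h1⟩
  · -- meets
    rintro (⟨a, k⟩ | (_ | _)) (⟨b, l⟩ | (_ | _))
    · by_cases hk : k = l
      · subst hk
        refine ⟨Sum.inl (min a b, k), ⟨rfl, min_le_left _ _⟩, ⟨rfl, min_le_right _ _⟩, ?_⟩
        rintro (⟨c, m⟩ | (_ | _)) h1 h2
        · exact show m = k ∧ c ≤ min a b from
            ⟨(h1 : m = k ∧ c ≤ a).1, le_min (h1 : m = k ∧ c ≤ a).2 (h2 : m = k ∧ c ≤ b).2⟩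
        · trivial
        · exact (h1 : False).elim
      · refine ⟨Sum.inr false, trivial, trivial, ?_⟩
        rintro (⟨c, m⟩ | (_ | _)) h1 h2
        · exact (hk ((h1 : m = k ∧ c ≤ a).1.symm.trans (h2 : m = l ∧ c ≤ b).1)).elim
        · trivial
        · exact (h1 : False).elim
    · exact ⟨Sum.inr false, trivial, trivial, fun z _ h2 => h2⟩
    · exact ⟨Sum.inl (a, k), ⟨rfl, le_rfl⟩, trivial, fun z h1 _ => h1⟩
    · exact ⟨Sum.inr false, trivial, trivial, fun z h1 _ => h1⟩
    · exact ⟨Sum.inr false, trivial, trivial, fun z h1 _ => h1⟩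
    · exact ⟨Sum.inr false, trivial, trivial, fun z h1 _ => h1⟩
    · exact ⟨Sum.inl (b, l), trivial, ⟨rfl, le_rfl⟩, fun z _ h2 => h2⟩
    · exact ⟨Sum.inr false, trivial, trivial, fun z _ h2 => h2⟩
    · exact ⟨Sum.inr true, trivial, trivial, fun z h1 _ => h1⟩
  · -- associativity
    rintro (⟨a, k⟩ | (_ | _)) (⟨b, l⟩ | (_ | _)) (⟨c, m⟩ | (_ | _)) <;>
      simp [SdMul, hφmul, hφcomp, mul_assoc]
  · -- identity
    rintro (⟨a, k⟩ | (_ | _)) <;> simp [SdMul, hφid, hφone]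
  · -- monotonicity
    rintro (⟨a, k⟩ | (_ | _)) (⟨b, l⟩ | (_ | _)) (⟨c, m⟩ | (_ | _)) h <;>
      first
        | exact (h : False).elim
        | exact ⟨trivial, trivial⟩
        | (obtain ⟨h1, h2⟩ := (h : l = m ∧ b ≤ c)
           subst h1
           exact ⟨show k * l = k * l ∧ a * φ k b ≤ a * φ k c from
               ⟨rfl, mulL _ _ _ (phimono _ _ _ h2)⟩,
             show l * k = l * k ∧ b * φ l a ≤ c * φ l a from ⟨rfl, mulR _ _ _ h2⟩⟩)
  · -- residuation
    rintro (⟨a, k⟩ | (_ | _)) (⟨c, m⟩ | (_ | _))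
    · constructor
      · -- left division (inl a k) \\ (inl c m)
        by_cases hk : ∃ l : K, k * l = m
        · obtain ⟨l, hl⟩ := hk
          refine ⟨Sum.inl (φs k (ldA a c), l), ?_, ?_⟩
          · exact ⟨hl, (hlA a _ c).mpr ((hφres k (φs k (ldA a c)) (ldA a c)).mpr le_rfl)⟩
          · rintro (⟨b, l'⟩ | (_ | _)) h
            · have h' : k * l' = m ∧ a * φ k b ≤ c := h
              exact ⟨(hK k l' l).1 (h'.1.trans hl.symm),
                (hφres k b (ldA a c)).mp ((hlA a (φ k b) c).mp h'.2)⟩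
            · trivial
            · exact (h : False).elim
        · refine ⟨Sum.inr false, trivial, ?_⟩
          rintro (⟨b, l'⟩ | (_ | _)) h
          · have h' : k * l' = m ∧ a * φ k b ≤ c := h
            exact (hk ⟨l', h'.1⟩).elim
          · trivial
          · exact (h : False).elim
      · -- right division
        by_cases hk : ∃ l : K, l * k = m
        · obtain ⟨l, hl⟩ := hk
          refine ⟨Sum.inl (rdA c (φ l a), l), ?_, ?_⟩
          · exact ⟨hl, (hrA _ (φ l a) c).mpr le_rfl⟩
          · rintro (⟨b, l'⟩ | (_ | _)) h
            · have h' : l' * k = m ∧ b * φ l' a ≤ c := h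
              have hl' : l' = l := (hK k l' l).2 (h'.1.trans hl.symm)
              subst hl'
              exact ⟨rfl, (hrA b (φ l' a) c).mp h'.2⟩
            · trivial
            · exact (h : False).elim
        · refine ⟨Sum.inr false, trivial, ?_⟩
          rintro (⟨b, l'⟩ | (_ | _)) h
          · have h' : l' * k = m ∧ b * φ l' a ≤ c := h
            exact (hk ⟨l', h'.1⟩).elim
          · trivial
          · exact (h : False).elim
    · -- x = inl, z = ⊥
      refine ⟨⟨Sum.inr false, trivial, ?_⟩, ⟨Sum.inr false, trivial, ?_⟩⟩ <;>
        · rintro (⟨b, l'⟩ | (_ | _)) h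
          · exact (h : False).elim
          · trivial
          · exact (h : False).elim
    · -- x = inl, z = ⊤
      exact ⟨⟨Sum.inr true, trivial, fun y _ => by rcases y with p | (_ | _) <;> trivial⟩,
        ⟨Sum.inr true, trivial, fun y _ => by rcases y with p | (_ | _) <;> trivial⟩⟩
    · -- x = ⊥, z = inl
      exact ⟨⟨Sum.inr true, trivial, fun y _ => by rcases y with p | (_ | _) <;> trivial⟩,
        ⟨Sum.inr true, trivial, fun y _ => by rcases y with p | (_ | _) <;> trivial⟩⟩
    · -- x = ⊥, z = ⊥
      exact ⟨⟨Sum.inr true, trivial, fun y _ => by rcases y with p | (_ | _) <;> trivial⟩,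
        ⟨Sum.inr true, trivial, fun y _ => by rcases y with p | (_ | _) <;> trivial⟩⟩
    · -- x = ⊥, z = ⊤
      exact ⟨⟨Sum.inr true, trivial, fun y _ => by rcases y with p | (_ | _) <;> trivial⟩,
        ⟨Sum.inr true, trivial, fun y _ => by rcases y with p | (_ | _) <;> trivial⟩⟩
    · -- x = ⊤, z = inl
      refine ⟨⟨Sum.inr false, trivial, ?_⟩, ⟨Sum.inr false, trivial, ?_⟩⟩ <;>
        · rintro (⟨b, l'⟩ | (_ | _)) h
          · exact (h : False).elim
          · trivial
          · exact (h : False).elim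
    · -- x = ⊤, z = ⊥
      refine ⟨⟨Sum.inr false, trivial, ?_⟩, ⟨Sum.inr false, trivial, ?_⟩⟩ <;>
        · rintro (⟨b, l'⟩ | (_ | _)) h
          · exact (h : False).elim
          · trivial
          · exact (h : False).elim
    · -- x = ⊤, z = ⊤
      exact ⟨⟨Sum.inr true, trivial, fun y _ => by rcases y with p | (_ | _) <;> trivial⟩,
        ⟨Sum.inr true, trivial, fun y _ => by rcases y with p | (_ | _) <;> trivial⟩⟩
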